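/- arXiv:0806.1745 — 2 statements merged into one kernel-verified Lean document; each statement's English description precedes it below -/
import Mathlib

section
/- Let X be a finite, connected, undirected graph with at least two vertices and doubling constant c_X ≥ 2. Then for every vertex x ∈ V and every real R with 10 ≤ R ≤ diam(X), one has (1 − 1/(2·c_X)) · |B(x,R)| ≥ |B(x, R/10)|. -/
/-!
Choose `y` at distance `m = ⌊R/2⌋` from `x`, which exists because the diameter is at least `R`,
and put `s = (m + R/10)/2`. The ball `B(y,s)` lies in `B(x,R)` and misses `B(x,R/10)`, while its
double `B(y,2s)` covers `B(x,R/10)`. Doubling then gives `|B(x,R/10)| ≤ c·|B(y,s)|`, so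
`B(x,R)` holds at least `(1 + 1/c)·|B(x,R/10)|` vertices.
-/

open Finset

/-- The closed ball of radius `R` (a real number) about `x` in the shortest-path metric
of the graph `G`. -/
noncomputable def gball {V : Type} [Fintype V] (G : SimpleGraph V) (x : V) (R : ℝ) : Finset V :=
  @Finset.filter _ (fun y => (G.dist x y : ℝ) ≤ R) (Classical.decPred _) Finset.univ

/-- The diameter of the graph `G` in the shortest-path metric. -/
noncomputable def gdiam {V : Type} [Fintype V] (G : SimpleGraph V) : ℕ :=
  Finset.univ.sup fun p : V × V => G.dist p.1 p.2

namespace SimpleGraph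

variable {V : Type} {G : SimpleGraph V}

lemma Walk.dist_getVert_eq_of_length_eq_dist {u v : V} {p : G.Walk u v}
    (hp : p.length = G.dist u v) {n : ℕ} (hn : n ≤ p.length) :
    G.dist u (p.getVert n) = n := by
  have hto := dist_le (p.take n)
  have hfrom := dist_le (p.drop n)
  have htri := (p.drop n).reachable.dist_triangle_right u
  simp only [Walk.take_length, Walk.drop_length] at hto hfrom
  omega

lemma Reachable.exists_dist_eq_of_le {u v : V} (huv : G.Reachable u v) {n : ℕ}
    (hn : n ≤ G.dist u v) : ∃ w, G.dist u w = n := by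
  obtain ⟨p, hp⟩ := huv.exists_walk_length_eq_dist
  exact ⟨p.getVert n, p.dist_getVert_eq_of_length_eq_dist hp (hp ▸ hn)⟩

end SimpleGraph

section Balls

variable {V : Type} [Fintype V] {G : SimpleGraph V}

lemma mem_gball {x y : V} {R : ℝ} : y ∈ gball G x R ↔ (G.dist x y : ℝ) ≤ R := by
  simp [gball]

lemma gball_subset_gball (hconn : G.Connected) {x y : V} {r R : ℝ}
    (h : (G.dist x y : ℝ) + r ≤ R) : gball G y r ⊆ gball G x R := by
  intro w hw
  rw [mem_gball] at hw ⊢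
  have htri : (G.dist x w : ℝ) ≤ G.dist x y + G.dist y w := by
    exact_mod_cast hconn.dist_triangle
  linarith

lemma disjoint_gball (hconn : G.Connected) {x y : V} {r s : ℝ}
    (h : r + s < (G.dist x y : ℝ)) : Disjoint (gball G x r) (gball G y s) := by
  refine Finset.disjoint_left.2 fun w hwx hwy => ?_
  rw [mem_gball] at hwx hwy
  have htri : (G.dist x y : ℝ) ≤ G.dist x w + G.dist y w := by
    rw [G.dist_comm (u := y)]
    exact_mod_cast hconn.dist_triangle
  linarith

lemma exists_gdiam_le_two_mul_dist (hconn : G.Connected) (x : V) :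
    ∃ z, gdiam G ≤ 2 * G.dist x z := by
  obtain ⟨⟨u, v⟩, -, huv⟩ := Finset.exists_mem_eq_sup Finset.univ
    ⟨(x, x), Finset.mem_univ _⟩ fun p : V × V => G.dist p.1 p.2
  have htri : G.dist u v ≤ G.dist x u + G.dist x v :=
    G.dist_comm (u := x) ▸ hconn.dist_triangle
  rcases le_total (G.dist x u) (G.dist x v) with h | h
  · exact ⟨v, by simp only [gdiam, huv]; omega⟩
  · exact ⟨u, by simp only [gdiam, huv]; omega⟩

end Balls

lemma card_le_div_add_one_mul_card_of_disjoint {α : Type*} {S T U : Finset α} {c : ℝ}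
    (hc : 0 < c) (hST : Disjoint S T) (hSU : S ⊆ U) (hTU : T ⊆ U) (hS : (#S : ℝ) ≤ c * #T) :
    (#S : ℝ) ≤ c / (c + 1) * #U := by
  classical
  have hsum : (#S : ℝ) + #T ≤ #U := by
    rw [← Nat.cast_add, ← Finset.card_union_of_disjoint hST]
    exact_mod_cast Finset.card_le_card (Finset.union_subset hSU hTU)
  rw [div_mul_eq_mul_div, le_div_iff₀ (by linarith)]
  nlinarith

theorem ball_measure_not_concentrated_general
    (V : Type) [Fintype V] (G : SimpleGraph V) (c : ℝ)
    (hconn : G.Connected)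
    (hc : 2 ≤ c)
    -- `c` is the doubling constant of `G`
    (hdoub : ∀ (x : V) (R : ℝ), 0 < R →
        ((gball G x (2 * R)).card : ℝ) ≤ c * ((gball G x R).card : ℝ))
    (x : V) (R : ℝ) (hR10 : 10 ≤ R) (hRD : R ≤ (gdiam G : ℝ)) :
    ((gball G x (R / 10)).card : ℝ) ≤ (1 - 1 / (2 * c)) * ((gball G x R).card : ℝ) := by
  obtain ⟨z, hz⟩ := exists_gdiam_le_two_mul_dist hconn x
  obtain ⟨m, hm_le, hm_gt⟩ : ∃ m : ℕ, (m : ℝ) ≤ R / 2 ∧ R / 2 < m + 1 :=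
    ⟨⌊R / 2⌋₊, Nat.floor_le (by linarith), Nat.lt_floor_add_one _⟩
  have hmz : (m : ℝ) ≤ G.dist x z := by
    have : (gdiam G : ℝ) ≤ 2 * G.dist x z := by exact_mod_cast hz
    linarith
  obtain ⟨y, hy⟩ := (hconn x z).exists_dist_eq_of_le (n := m) (by exact_mod_cast hmz)
  obtain ⟨s, hs⟩ : ∃ s : ℝ, 2 * s = m + R / 10 := ⟨(m + R / 10) / 2, by ring⟩
  have hfar : gball G y s ⊆ gball G x R := gball_subset_gball hconn (by rw [hy]; linarith)
  -- `R / 10 + s < m` amounts to `3 R / 10 < m`, which holds since `m > R / 2 - 1` and `R > 5`.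
  have hapart : Disjoint (gball G x (R / 10)) (gball G y s) :=
    disjoint_gball hconn (by rw [hy]; linarith)
  have hcover : gball G x (R / 10) ⊆ gball G y (2 * s) :=
    gball_subset_gball hconn (by rw [G.dist_comm, hy]; linarith)
  have hnear : gball G x (R / 10) ⊆ gball G x R :=
    gball_subset_gball hconn (by rw [SimpleGraph.dist_self, Nat.cast_zero]; linarith)
  have hsmall : ((gball G x (R / 10)).card : ℝ) ≤ c / (c + 1) * (gball G x R).card := by
    refine card_le_div_add_one_mul_card_of_disjoint (by linarith) hapart hnear hfar ?_
    calc ((gball G x (R / 10)).card : ℝ) ≤ (gball G y (2 * s)).card := by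
          exact_mod_cast card_le_card hcover
      _ ≤ c * (gball G y s).card := hdoub y s (by linarith)
  have hratio : c / (c + 1) ≤ 1 - 1 / (2 * c) := by
    have hsplit : c / (c + 1) = 1 - 1 / (c + 1) := by field_simp; ring
    have hrecip : 1 / (2 * c) ≤ 1 / (c + 1) :=
      one_div_le_one_div_of_le (by linarith) (by linarith)
    linarith
  exact hsmall.trans (mul_le_mul_of_nonneg_right hratio (Nat.cast_nonneg _))

/-- in a finite connected graph with at least two vertices and doubling
constant `c ≥ 2`, for every vertex `x` and real `10 ≤ R ≤ diam(X)`,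
`(1 - 1/(2c))·|B(x,R)| ≥ |B(x,R/10)|`. -/
theorem ball_measure_not_concentrated
    (V : Type) [Fintype V] (G : SimpleGraph V) (c : ℝ)
    (hconn : G.Connected)
    (hcard : 2 ≤ Fintype.card V)
    (hc : 2 ≤ c)
    -- `c` is the doubling constant of `G`
    (hdoub : ∀ (x : V) (R : ℝ), 0 < R →
        ((gball G x (2 * R)).card : ℝ) ≤ c * ((gball G x R).card : ℝ))
    (x : V) (R : ℝ) (hR10 : 10 ≤ R) (hRD : R ≤ (gdiam G : ℝ)) :
    ((gball G x (R / 10)).card : ℝ) ≤ (1 - 1 / (2 * c)) * ((gball G x R).card : ℝ) :=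
  ball_measure_not_concentrated_general V G c hconn hc hdoub x R hR10 hRD
end

section
/- Let X be a finite, connected, undirected graph with at least two vertices and doubling constant c_X ≥ 2. Then for every vertex x ∈ V and every ε ∈ (0,1), |B(x, ε·diam(X))| ≤ 1 + |V| · (1 − 1/(2·c_X))^{⌊log₁₀(1/ε)⌋}. -/
open Finset

/-!
Fix `x` and a radius `R ≥ 1/2` with `10 R ≤ diam`. Along a geodesic from `x` to a point at
distance `≥ diam / 2` there is a vertex `y` with `3R < d(x, y) ≤ 5R`; with `r = (d(x, y) + R) / 2`
the ball `B(y, r)` is disjoint from `B(x, R)`, lies in `B(x, 10R)`, and `B(y, 2r) ⊇ B(x, R)`.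
Doubling gives `|B(x, R)| ≤ c |B(y, r)|`, so `B(x, R)` fills at most a fraction `1 - 1/(2c)` of
`B(x, 10R)`. Iterating `⌊log₁₀(1/ε)⌋` times from `R = ε · diam` gives the bound; balls of
radius `< 1/2` are the single vertex `x`.
-/

lemma Real.pow_natFloor_logb_le {b y : ℝ} (hb : 1 < b) (hy : 1 ≤ y) :
    b ^ ⌊Real.logb b y⌋₊ ≤ y := by
  rw [← Real.rpow_natCast, ← Real.le_logb_iff_rpow_le hb (by linarith)]
  exact Nat.floor_le (Real.logb_nonneg hb hy)

lemma one_sub_one_div_two_mul_nonneg {c : ℝ} (hc : 1 / 2 ≤ c) : 0 ≤ 1 - 1 / (2 * c) := by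
  rw [sub_nonneg, div_le_one (by linarith)]
  linarith

lemma card_le_of_disjoint_of_card_le_mul {α : Type*} {A B T : Finset α} {c : ℝ} (hc : 1 ≤ c)
    (hAB : Disjoint A B) (hAT : A ⊆ T) (hBT : B ⊆ T) (hA : (#A : ℝ) ≤ c * #B) :
    (#A : ℝ) ≤ (1 - 1 / (2 * c)) * #T := by
  classical
  have hsum : (#A : ℝ) + #B ≤ #T := by
    exact_mod_cast card_union_of_disjoint hAB ▸ card_le_card (union_subset hAT hBT)
  have hsmall : (#A : ℝ) / (2 * c) ≤ (1 - 1 / (2 * c)) * #B := by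
    have hB : (0 : ℝ) ≤ #B := Nat.cast_nonneg _
    rw [div_le_iff₀ (by linarith), show (1 - 1 / (2 * c)) * #B * (2 * c) = (2 * c - 1) * #B by
      field_simp]
    nlinarith
  have hθ := one_sub_one_div_two_mul_nonneg (by linarith : 1 / 2 ≤ c)
  calc (#A : ℝ) = (1 - 1 / (2 * c)) * #A + #A / (2 * c) := by ring
    _ ≤ (1 - 1 / (2 * c)) * (#A + #B) := by linarith
    _ ≤ (1 - 1 / (2 * c)) * #T := by gcongr

namespace SimpleGraph

variable {V : Type} {G : SimpleGraph V}

lemma Connected.exists_dist_eq (hconn : G.Connected) {x z : V} {d : ℕ}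
    (hd : d ≤ G.dist x z) : ∃ y, G.dist x y = d := by
  obtain ⟨p, hp⟩ := hconn.exists_walk_length_eq_dist x z
  refine ⟨p.getVert d, le_antisymm ?_ ?_⟩
  · simpa [hp, hd] using dist_le (p.take d)
  · have hrest : G.dist (p.getVert d) z ≤ p.length - d := by simpa using dist_le (p.drop d)
    have := hconn.dist_triangle (u := x) (v := p.getVert d) (w := z)
    omega

variable [Fintype V]

lemma mem_gball {x y : V} {R : ℝ} : y ∈ gball G x R ↔ (G.dist x y : ℝ) ≤ R := by
  classical
  simp [gball]

lemma gball_mono (x : V) {R R' : ℝ} (h : R ≤ R') : gball G x R ⊆ gball G x R' :=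
  fun _ hy => mem_gball.mpr ((mem_gball.mp hy).trans h)

lemma Connected.card_gball_le_one (hconn : G.Connected) (x : V) {R : ℝ} (hR : R < 1) :
    (gball G x R).card ≤ 1 := by
  have hcenter : ∀ y ∈ gball G x R, y = x := fun y hy => by
    have : G.dist x y < 1 := by exact_mod_cast (mem_gball.mp hy).trans_lt hR
    exact (hconn.dist_eq_zero_iff.mp (Nat.lt_one_iff.mp this)).symm
  exact card_le_one.mpr fun a ha b hb => (hcenter a ha).trans (hcenter b hb).symm

lemma exists_two_mul_dist_ge_gdiam [Nonempty V] (hconn : G.Connected) (x : V) :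
    ∃ z, gdiam G ≤ 2 * G.dist x z := by
  obtain ⟨⟨u, v⟩, -, hp⟩ := exists_mem_eq_sup univ univ_nonempty
    (fun p : V × V => G.dist p.1 p.2)
  have hp : gdiam G = G.dist u v := hp
  have htri : G.dist u v ≤ G.dist x u + G.dist x v := by
    simpa [dist_comm] using hconn.dist_triangle (u := u) (v := x) (w := v)
  rcases le_total (G.dist x u) (G.dist x v) with h | h
  · exact ⟨v, by rw [hp]; omega⟩
  · exact ⟨u, by rw [hp]; omega⟩

lemma Connected.gball_subset_gball (hconn : G.Connected) {x y : V} {R R' : ℝ}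
    (h : G.dist x y + R ≤ R') : gball G y R ⊆ gball G x R' := fun w hw => by
  have htri : (G.dist x w : ℝ) ≤ G.dist x y + G.dist y w := by exact_mod_cast hconn.dist_triangle
  exact mem_gball.mpr (by linarith [mem_gball.mp hw])

lemma Connected.disjoint_gball (hconn : G.Connected) {x y : V} {R R' : ℝ}
    (h : R + R' < G.dist x y) : Disjoint (gball G x R) (gball G y R') := by
  refine Finset.disjoint_left.mpr fun w hx hy => ?_
  have htri : (G.dist x y : ℝ) ≤ G.dist x w + G.dist y w := by
    exact_mod_cast dist_comm (u := w) ▸ hconn.dist_triangle (u := x) (v := w) (w := y)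
  linarith [mem_gball.mp hx, mem_gball.mp hy]

lemma Connected.exists_dist_mem_Ioc (hconn : G.Connected) (x : V) {R : ℝ} (hR : 1 / 2 ≤ R)
    (hRD : 10 * R ≤ gdiam G) : ∃ y, (G.dist x y : ℝ) ∈ Set.Ioc (3 * R) (5 * R) := by
  have : Nonempty V := hconn.nonempty
  obtain ⟨z, hz⟩ := exists_two_mul_dist_ge_gdiam hconn x
  have hfloor_le : (⌊5 * R⌋₊ : ℝ) ≤ 5 * R := Nat.floor_le (by linarith)
  have hfloor_gt : 5 * R - 1 < ⌊5 * R⌋₊ := Nat.sub_one_lt_floor _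
  have hfar : ⌊5 * R⌋₊ ≤ G.dist x z := by
    have : (gdiam G : ℝ) ≤ 2 * G.dist x z := by exact_mod_cast hz
    exact_mod_cast hfloor_le.trans (by linarith : 5 * R ≤ G.dist x z)
  obtain ⟨y, hy⟩ := hconn.exists_dist_eq hfar
  exact ⟨y, by rw [hy]; linarith, by rw [hy]; exact hfloor_le⟩

def IsDoubling (G : SimpleGraph V) (c : ℝ) : Prop :=
  ∀ (x : V) (R : ℝ), 0 < R → ((gball G x (2 * R)).card : ℝ) ≤ c * ((gball G x R).card : ℝ)

variable {c : ℝ}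

lemma IsDoubling.card_gball_le (hdoub : G.IsDoubling c) (hconn : G.Connected) (hc : 1 ≤ c)
    (x : V) {R : ℝ} (hR : 1 / 2 ≤ R) (hRD : 10 * R ≤ gdiam G) :
    (#(gball G x R) : ℝ) ≤ (1 - 1 / (2 * c)) * #(gball G x (10 * R)) := by
  obtain ⟨y, hfar, hnear⟩ := hconn.exists_dist_mem_Ioc x hR hRD
  set r : ℝ := (G.dist x y + R) / 2 with hr
  have hyx : (G.dist y x : ℝ) = G.dist x y := by rw [dist_comm]
  refine card_le_of_disjoint_of_card_le_mul hc
    (hconn.disjoint_gball (y := y) (R' := r) (by linarith)) (gball_mono x (by linarith))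
    (hconn.gball_subset_gball (y := y) (by linarith)) ?_
  calc (#(gball G x R) : ℝ) ≤ #(gball G y (2 * r)) := by
        exact_mod_cast card_le_card (hconn.gball_subset_gball (y := x) (by linarith))
    _ ≤ c * #(gball G y r) := hdoub y r (by linarith)

lemma IsDoubling.card_gball_le_pow_mul (hdoub : G.IsDoubling c) (hconn : G.Connected)
    (hc : 1 ≤ c) (x : V) (k : ℕ) {R : ℝ} (hR : 1 / 2 ≤ R) (hRD : 10 ^ k * R ≤ gdiam G) :
    (#(gball G x R) : ℝ) ≤ (1 - 1 / (2 * c)) ^ k * #(gball G x (10 ^ k * R)) := by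
  induction k generalizing R with
  | zero => simp
  | succ k ih =>
    have hθ := one_sub_one_div_two_mul_nonneg (by linarith : 1 / 2 ≤ c)
    have h10 : (10 : ℝ) ≤ 10 ^ (k + 1) := le_self_pow₀ (by norm_num) (by omega)
    have hscaled : 10 ^ k * (10 * R) ≤ gdiam G := by rwa [← mul_assoc, ← pow_succ]
    calc (#(gball G x R) : ℝ) ≤ (1 - 1 / (2 * c)) * #(gball G x (10 * R)) :=
          hdoub.card_gball_le hconn hc x hR (by nlinarith)
      _ ≤ (1 - 1 / (2 * c)) * ((1 - 1 / (2 * c)) ^ k * #(gball G x (10 ^ k * (10 * R)))) := by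
          gcongr
          exact ih (by linarith) hscaled
      _ = (1 - 1 / (2 * c)) ^ (k + 1) * #(gball G x (10 ^ (k + 1) * R)) := by ring_nf

end SimpleGraph

theorem small_ball_cardinality_bound_general
    (V : Type) [Fintype V] (G : SimpleGraph V) (c : ℝ)
    (hconn : G.Connected)
    (hc : 2 ≤ c)
    -- `c` is the doubling constant of `G`
    (hdoub : ∀ (x : V) (R : ℝ), 0 < R →
        ((gball G x (2 * R)).card : ℝ) ≤ c * ((gball G x R).card : ℝ))
    (x : V) (ε : ℝ) (hε0 : 0 < ε) (hε1 : ε < 1) :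
    ((gball G x (ε * (gdiam G : ℝ))).card : ℝ)
      ≤ 1 + (Fintype.card V : ℝ) * (1 - 1 / (2 * c)) ^ ⌊Real.logb 10 (1 / ε)⌋₊ := by
  set k := ⌊Real.logb 10 (1 / ε)⌋₊
  have hθ := one_sub_one_div_two_mul_nonneg (by linarith : 1 / 2 ≤ c)
  have hbound : 0 ≤ (Fintype.card V : ℝ) * (1 - 1 / (2 * c)) ^ k := by positivity
  rcases lt_or_ge (ε * gdiam G) (1 / 2) with hsmall | hlarge
  · have : (#(gball G x (ε * gdiam G)) : ℝ) ≤ 1 := by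
      exact_mod_cast hconn.card_gball_le_one x (by linarith)
    linarith
  · have hk : (10 : ℝ) ^ k * ε ≤ 1 := by
      have := Real.pow_natFloor_logb_le (b := 10) (by norm_num) (one_le_one_div hε0 hε1.le)
      rwa [le_div_iff₀ hε0] at this
    have hD : 0 ≤ (gdiam G : ℝ) := Nat.cast_nonneg _
    calc (#(gball G x (ε * gdiam G)) : ℝ)
        ≤ (1 - 1 / (2 * c)) ^ k * #(gball G x (10 ^ k * (ε * gdiam G))) :=
          SimpleGraph.IsDoubling.card_gball_le_pow_mul (G := G) hdoub hconn (by linarith) x k hlarge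
            (by nlinarith)
      _ ≤ (1 - 1 / (2 * c)) ^ k * Fintype.card V := by
          gcongr
          exact_mod_cast card_le_univ _
      _ ≤ _ := by linarith

/-- in a finite connected graph with at least two vertices and doubling constant
`c ≥ 2`, for every vertex `x` and `ε ∈ (0,1)`,
`|B(x, ε·diam(X))| ≤ 1 + |V|·(1 - 1/(2c))^⌊log₁₀(1/ε)⌋`. -/
theorem small_ball_cardinality_bound
    (V : Type) [Fintype V] (G : SimpleGraph V) (c : ℝ)
    (hconn : G.Connected)
    (hcard : 2 ≤ Fintype.card V)
    (hc : 2 ≤ c)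
    -- `c` is the doubling constant of `G`
    (hdoub : ∀ (x : V) (R : ℝ), 0 < R →
        ((gball G x (2 * R)).card : ℝ) ≤ c * ((gball G x R).card : ℝ))
    (x : V) (ε : ℝ) (hε0 : 0 < ε) (hε1 : ε < 1) :
    ((gball G x (ε * (gdiam G : ℝ))).card : ℝ)
      ≤ 1 + (Fintype.card V : ℝ) * (1 - 1 / (2 * c)) ^ ⌊Real.logb 10 (1 / ε)⌋₊ :=
  small_ball_cardinality_bound_general V G c hconn hc hdoub x ε hε0 hε1
end
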